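/- arXiv:2211.17262 — 8 statements merged into one kernel-verified Lean document; each statement's English description precedes it below -/
import Mathlib

section
/- Every ndao 𝒪 on a lattice L is consistent: for all x, y ∈ L with x ≤ y there exist w ∈ 𝒪ₗ(x,y) and z ∈ 𝒪ᵤ(x,y) such that w ≤ z. -/
/-- The Smyth order: `X ⪯ˢ Y` iff every `y ∈ Y` has some `x ∈ X` with `x ≤ y`. -/
def SmythLE {L : Type*} [Preorder L] (X Y : Set L) : Prop :=
  ∀ y ∈ Y, ∃ x ∈ X, x ≤ y

/-- The Hoare order: `X ⪯ᴴ Y` iff every `x ∈ X` has some `y ∈ Y` with `x ≤ y`. -/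
def HoareLE {L : Type*} [Preorder L] (X Y : Set L) : Prop :=
  ∀ x ∈ X, ∃ y ∈ Y, x ≤ y

/-- `(X₁, Y₁) ⪯ᴬᵢ (X₂, Y₂)` iff `X₁ ⪯ˢ X₂` and `Y₂ ⪯ᴴ Y₁`. -/
def AiLE {L : Type*} [Preorder L] (X₁ Y₁ X₂ Y₂ : Set L) : Prop :=
  SmythLE X₁ X₂ ∧ HoareLE Y₂ Y₁

/-- A non-deterministic approximation operator (ndao) on a lattice `L`. -/
structure NDAO (L : Type*) [Lattice L] where
  l : L → L → Set L
  u : L → L → Set L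
  l_nonempty : ∀ x y, (l x y).Nonempty
  u_nonempty : ∀ x y, (u x y).Nonempty
  mono : ∀ ⦃x₁ y₁ x₂ y₂ : L⦄, x₁ ≤ x₂ → y₂ ≤ y₁ →
    AiLE (l x₁ y₁) (u x₁ y₁) (l x₂ y₂) (u x₂ y₂)
  isExact : ∀ x, l x x = u x x

theorem SmythLE.exists_le_of_hoareLE {L : Type*} [Preorder L] {X Y Z : Set L}
    (hXY : SmythLE X Y) (hYZ : HoareLE Y Z) (hY : Y.Nonempty) : ∃ x ∈ X, ∃ z ∈ Z, x ≤ z := by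
  obtain ⟨c, hc⟩ := hY
  obtain ⟨x, hx, hxc⟩ := hXY c hc
  obtain ⟨z, hz, hcz⟩ := hYZ c hc
  exact ⟨x, hx, z, hz, hxc.trans hcz⟩

/-- Every ndao is consistent: consistent inputs yield a consistent pair
of a lower and an upper bound. -/
theorem ndao_consistent {L : Type*} [Lattice L] (O : NDAO L) :
    ∀ x y : L, x ≤ y → ∃ w ∈ O.l x y, ∃ z ∈ O.u x y, w ≤ z := by
  intro x y hxy
  obtain ⟨hSmyth, hHoare⟩ := O.mono hxy le_rfl
  rw [← O.isExact y] at hHoare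
  exact hSmyth.exists_le_of_hoareLE hHoare (O.l_nonempty y y)
end

section
/- Let 𝒪 be a symmetric ndao on a lattice L. Then for all x, y ∈ L with x ≤ y: 𝒪ₗ(x,y) ⪯ˢ 𝒪ᵤ(x,y) and 𝒪ₗ(x,y) ⪯ᴴ 𝒪ᵤ(x,y). -/
/-- For a symmetric ndao (`𝒪ₗ(x,y) = 𝒪ᵤ(y,x)`), a stronger consistency holds:
for every `x ≤ y`, `𝒪ₗ(x,y) ⪯ˢ 𝒪ᵤ(x,y)` and `𝒪ₗ(x,y) ⪯ᴴ 𝒪ᵤ(x,y)`. -/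
theorem symmetric_ndao_strong_consistency {L : Type*} [Lattice L] (O : NDAO L)
    (hsym : ∀ x y : L, O.l x y = O.u y x) :
    ∀ x y : L, x ≤ y →
      SmythLE (O.l x y) (O.u x y) ∧ HoareLE (O.l x y) (O.u x y) := by
  intro x y hxy
  -- `(x, y) ≤ᵢ (y, x)`, and symmetry reads `𝒪(y, x)` as the swapped pair `(𝒪ᵤ(x, y), 𝒪ₗ(x, y))`.
  have h := O.mono hxy hxy
  rwa [hsym y x, ← hsym x y] at h
end

section
/- Let L be a lattice and 𝒪 : L² → ℘(L) × ℘(L) an arbitrary operator (no monotonicity or exactness assumed), with components 𝒪ₗ, 𝒪ᵤ. Define, for X, Y ⊆ L, 𝒪'(X, Y) = (⋃_{x ∈ ↑X, y ∈ ↓Y} ↑𝒪ₗ(x,y), ⋃_{x ∈ ↑X, y ∈ ↓Y} ↓𝒪ᵤ(x,y)). Then 𝒪' is ⪯ᴬᵢ-monotonic: whenever (X, Y) ⪯ᴬᵢ (X', Y'), also 𝒪'(X, Y) ⪯ᴬᵢ 𝒪'(X', Y'). -/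
/-- The upward closure `↑X = {y | ∃ x ∈ X, x ≤ y}`. -/
def upClos {L : Type*} [Preorder L] (X : Set L) : Set L := {y | ∃ x ∈ X, x ≤ y}

/-- The downward closure `↓X = {y | ∃ x ∈ X, y ≤ x}`. -/
def downClos {L : Type*} [Preorder L] (X : Set L) : Set L := {y | ∃ x ∈ X, y ≤ x}

/-- Lower component of the derived state operator:
`⋃_{x ∈ ↑X, y ∈ ↓Y} ↑𝒪ₗ(x,y)`. -/
def stateL {L : Type*} [Preorder L] (Ol : L → L → Set L) (X Y : Set L) : Set L :=
  ⋃ x ∈ upClos X, ⋃ y ∈ downClos Y, upClos (Ol x y)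

/-- Upper component of the derived state operator:
`⋃_{x ∈ ↑X, y ∈ ↓Y} ↓𝒪ᵤ(x,y)`. -/
def stateU {L : Type*} [Preorder L] (Ou : L → L → Set L) (X Y : Set L) : Set L :=
  ⋃ x ∈ upClos X, ⋃ y ∈ downClos Y, downClos (Ou x y)

/-! The hypotheses `X ⪯ˢ X'` and `Y' ⪯ᴴ Y` say exactly that `↑X' ⊆ ↑X` and `↓Y' ⊆ ↓Y`, so both
components of `𝒪'(X', Y')` are unions over fewer indices than those of `𝒪'(X, Y)`. Inclusion of sets
implies both the Smyth and the Hoare order (each element witnesses itself). -/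

section Closures

variable {L : Type*} [Preorder L] {X X' Y Y' : Set L}

theorem SmythLE.of_superset (h : Y ⊆ X) : SmythLE X Y :=
  fun y hy => ⟨y, h hy, le_rfl⟩

theorem HoareLE.of_subset (h : X ⊆ Y) : HoareLE X Y :=
  fun x hx => ⟨x, h hx, le_rfl⟩

theorem SmythLE.upClos_subset (h : SmythLE X X') : upClos X' ⊆ upClos X := by
  rintro z ⟨x', hx', hx'z⟩
  obtain ⟨x, hx, hxx'⟩ := h x' hx'
  exact ⟨x, hx, hxx'.trans hx'z⟩

theorem HoareLE.downClos_subset (h : HoareLE Y' Y) : downClos Y' ⊆ downClos Y := by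
  rintro z ⟨y', hy', hzy'⟩
  obtain ⟨y, hy, hy'y⟩ := h y' hy'
  exact ⟨y, hy, hzy'.trans hy'y⟩

theorem stateL_subset_stateL (Ol : L → L → Set L) (hX : upClos X' ⊆ upClos X)
    (hY : downClos Y' ⊆ downClos Y) : stateL Ol X' Y' ⊆ stateL Ol X Y :=
  Set.biUnion_subset_biUnion_left hX |>.trans <|
    Set.biUnion_mono subset_rfl fun _ _ => Set.biUnion_subset_biUnion_left hY

theorem stateU_subset_stateU (Ou : L → L → Set L) (hX : upClos X' ⊆ upClos X)
    (hY : downClos Y' ⊆ downClos Y) : stateU Ou X' Y' ⊆ stateU Ou X Y :=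
  Set.biUnion_subset_biUnion_left hX |>.trans <|
    Set.biUnion_mono subset_rfl fun _ _ => Set.biUnion_subset_biUnion_left hY

end Closures

/-- The derived state operator of an arbitrary operator is `⪯ᴬᵢ`-monotonic. -/
theorem state_operator_aiMono {L : Type*} [Lattice L] (Ol Ou : L → L → Set L) :
    ∀ X Y X' Y' : Set L, AiLE X Y X' Y' →
      AiLE (stateL Ol X Y) (stateU Ou X Y) (stateL Ol X' Y') (stateU Ou X' Y') := by
  rintro X Y X' Y' ⟨hXX', hY'Y⟩
  have hX := hXX'.upClos_subset
  have hY := hY'Y.downClos_subset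
  exact ⟨.of_superset (stateL_subset_stateL Ol hX hY),
    .of_subset (stateU_subset_stateU Ou hX hY)⟩
end

section
/- Let L be a lattice and 𝒪' : ℘(L) × ℘(L) → ℘(L) × ℘(L) a ⪯ᴬᵢ-monotonic operator that is exact, i.e., for every x ∈ L there exists z ∈ 𝒪'ₗ({x}, {x}) ∩ 𝒪'ᵤ({x}, {x}). Then 𝒪' is consistent: for all x, y ∈ L with x ≤ y there exist w ∈ 𝒪'ₗ({x}, {y}) and z ∈ 𝒪'ᵤ({x}, {y}) with w ≤ z. -/
/-! The idea: `({x}, {y}) ⪯ᴬᵢ ({x}, {x})` whenever `x ≤ y`, so monotonicity carries the common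
element `z` of `𝒪'ₗ({x}, {x})` and `𝒪'ᵤ({x}, {x})` back to some `w ≤ z` in `𝒪'ₗ({x}, {y})` and
some `z' ≥ z` in `𝒪'ᵤ({x}, {y})`. -/

section Preorder

variable {L : Type*} [Preorder L]

theorem SmythLE.refl (X : Set L) : SmythLE X X :=
  fun x hx => ⟨x, hx, le_rfl⟩

theorem HoareLE.singleton {x y : L} (hxy : x ≤ y) : HoareLE {x} {y} := by
  rintro a rfl
  exact ⟨y, rfl, hxy⟩

theorem AiLE.singleton_singleton {x y : L} (hxy : x ≤ y) : AiLE {x} {y} {x} {x} :=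
  ⟨SmythLE.refl _, HoareLE.singleton hxy⟩

theorem AiLE.exists_le_of_mem_inter {X₁ Y₁ X₂ Y₂ : Set L} (h : AiLE X₁ Y₁ X₂ Y₂) {z : L}
    (hz : z ∈ X₂ ∩ Y₂) : ∃ w ∈ X₁, ∃ z' ∈ Y₁, w ≤ z' := by
  obtain ⟨w, hw, hwz⟩ := h.1 z hz.1
  obtain ⟨z', hz', hzz'⟩ := h.2 z hz.2
  exact ⟨w, hw, z', hz', hwz.trans hzz'⟩

end Preorder

/-- An exact `⪯ᴬᵢ`-monotonic state operator is consistent. -/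
theorem exact_state_operator_consistent {L : Type*} [Lattice L]
    (Ol Ou : Set L → Set L → Set L)
    (hmono : ∀ X₁ Y₁ X₂ Y₂ : Set L, AiLE X₁ Y₁ X₂ Y₂ →
       AiLE (Ol X₁ Y₁) (Ou X₁ Y₁) (Ol X₂ Y₂) (Ou X₂ Y₂))
    (hexact : ∀ x : L, ∃ z : L, z ∈ Ol {x} {x} ∩ Ou {x} {x}) :
    ∀ x y : L, x ≤ y → ∃ w ∈ Ol {x} {y}, ∃ z ∈ Ou {x} {y}, w ≤ z := by
  intro x y hxy
  obtain ⟨z, hz⟩ := hexact x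
  exact (hmono _ _ _ _ (AiLE.singleton_singleton hxy)).exists_le_of_mem_inter hz
end

section
/- Let L be a complete lattice and 𝒪 an ndao on L such that 𝒪ₗ(x,y) = {f(x,y)} and 𝒪ᵤ(x,y) = {g(x,y)} are singletons for all x, y ∈ L, and let (x^kk, y^kk) be the ≤ᵢ-least fixpoint of the deterministic approximation operator (x,y) ↦ (f(x,y), g(x,y)) on L². Let 𝒪' be the state operator derived from 𝒪. Then the ⪯ᴬᵢ-least fixpoint of 𝒪' (on pairs of an upward-closed and a downward-closed set) equals (↑{x^kk}, ↓{y^kk}). -/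
section Closures

variable {L : Type*} [Preorder L]

@[simp]
lemma mem_upClos_singleton {a z : L} : z ∈ upClos ({a} : Set L) ↔ a ≤ z := by
  simp [upClos]

@[simp]
lemma mem_downClos_singleton {b z : L} : z ∈ downClos ({b} : Set L) ↔ z ≤ b := by
  simp [downClos]

@[simp]
lemma upClos_upClos (X : Set L) : upClos (upClos X) = upClos X := by
  ext z
  exact ⟨fun ⟨_, ⟨x, hx, hxy⟩, hyz⟩ => ⟨x, hx, hxy.trans hyz⟩, fun hz => ⟨z, hz, le_rfl⟩⟩

@[simp]
lemma downClos_downClos (Y : Set L) : downClos (downClos Y) = downClos Y := by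
  ext z
  exact ⟨fun ⟨_, ⟨y, hy, hxy⟩, hzx⟩ => ⟨y, hy, hzx.trans hxy⟩, fun hz => ⟨z, hz, le_rfl⟩⟩

lemma smythLE_upClos_singleton {a : L} {X : Set L} :
    SmythLE (upClos {a}) X ↔ ∀ x ∈ X, a ≤ x := by
  simp only [SmythLE, mem_upClos_singleton]
  exact forall₂_congr fun x _ => ⟨fun ⟨w, haw, hwx⟩ => haw.trans hwx, fun h => ⟨x, h, le_rfl⟩⟩

lemma hoareLE_downClos_singleton {b : L} {Y : Set L} :
    HoareLE Y (downClos {b}) ↔ ∀ y ∈ Y, y ≤ b := by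
  simp only [HoareLE, mem_downClos_singleton]
  exact forall₂_congr fun y _ => ⟨fun ⟨w, hwb, hyw⟩ => hyw.trans hwb, fun h => ⟨y, h, le_rfl⟩⟩

end Closures

section SingletonValued

variable {L : Type*} [Preorder L] {Ol Ou : L → L → Set L} {f g : L → L → L}

lemma mem_stateL_of_eq_singleton (hf : ∀ x y, Ol x y = {f x y}) {X Y : Set L} {z : L} :
    z ∈ stateL Ol X Y ↔ ∃ x ∈ upClos X, ∃ y ∈ downClos Y, f x y ≤ z := by
  simp [stateL, hf]

lemma mem_stateU_of_eq_singleton (hg : ∀ x y, Ou x y = {g x y}) {X Y : Set L} {z : L} :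
    z ∈ stateU Ou X Y ↔ ∃ x ∈ upClos X, ∃ y ∈ downClos Y, z ≤ g x y := by
  simp [stateU, hg]

lemma stateL_upClos_downClos_singleton (hf : ∀ x y, Ol x y = {f x y})
    (hfm : ∀ ⦃x₁ y₁ x₂ y₂⦄, x₁ ≤ x₂ → y₂ ≤ y₁ → f x₁ y₁ ≤ f x₂ y₂) (a b : L) :
    stateL Ol (upClos {a}) (downClos {b}) = upClos {f a b} := by
  ext z
  simp only [mem_stateL_of_eq_singleton hf, upClos_upClos, downClos_downClos,
    mem_upClos_singleton, mem_downClos_singleton]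
  constructor
  · rintro ⟨x, hax, y, hyb, hz⟩
    exact (hfm hax hyb).trans hz
  · exact fun hz => ⟨a, le_rfl, b, le_rfl, hz⟩

lemma stateU_upClos_downClos_singleton (hg : ∀ x y, Ou x y = {g x y})
    (hgm : ∀ ⦃x₁ y₁ x₂ y₂⦄, x₁ ≤ x₂ → y₂ ≤ y₁ → g x₂ y₂ ≤ g x₁ y₁) (a b : L) :
    stateU Ou (upClos {a}) (downClos {b}) = downClos {g a b} := by
  ext z
  simp only [mem_stateU_of_eq_singleton hg, upClos_upClos, downClos_downClos,
    mem_upClos_singleton, mem_downClos_singleton]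
  constructor
  · rintro ⟨x, hax, y, hyb, hz⟩
    exact hz.trans (hgm hax hyb)
  · exact fun hz => ⟨a, le_rfl, b, le_rfl, hz⟩

end SingletonValued

lemma NDAO.mono_of_l_eq_singleton {L : Type*} [Lattice L] (O : NDAO L) {f : L → L → L}
    (hf : ∀ x y, O.l x y = {f x y}) ⦃x₁ y₁ x₂ y₂ : L⦄ (hx : x₁ ≤ x₂) (hy : y₂ ≤ y₁) :
    f x₁ y₁ ≤ f x₂ y₂ := by
  have h := (O.mono hx hy).1
  rw [hf, hf] at h
  obtain ⟨_, rfl, hle⟩ := h _ rfl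
  exact hle

lemma NDAO.anti_of_u_eq_singleton {L : Type*} [Lattice L] (O : NDAO L) {g : L → L → L}
    (hg : ∀ x y, O.u x y = {g x y}) ⦃x₁ y₁ x₂ y₂ : L⦄ (hx : x₁ ≤ x₂) (hy : y₂ ≤ y₁) :
    g x₂ y₂ ≤ g x₁ y₁ := by
  have h := (O.mono hx hy).2
  rw [hg, hg] at h
  obtain ⟨_, rfl, hle⟩ := h _ rfl
  exact hle

section CompleteLattice

variable {L : Type*} [CompleteLattice L] {Ol Ou : L → L → Set L} {f g : L → L → L}
  (hfm : ∀ ⦃x₁ y₁ x₂ y₂⦄, x₁ ≤ x₂ → y₂ ≤ y₁ → f x₁ y₁ ≤ f x₂ y₂)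
  (hgm : ∀ ⦃x₁ y₁ x₂ y₂⦄, x₁ ≤ x₂ → y₂ ≤ y₁ → g x₂ y₂ ≤ g x₁ y₁)

include hfm in
lemma apply_sInf_sSup_le_sInf_of_subset_stateL (hf : ∀ x y, Ol x y = {f x y}) {X Y : Set L}
    (hX : X ⊆ stateL Ol X Y) : f (sInf X) (sSup Y) ≤ sInf X := by
  refine le_sInf fun z hz => ?_
  obtain ⟨x, ⟨x', hx', hx'x⟩, y, ⟨y', hy', hyy'⟩, hz⟩ := (mem_stateL_of_eq_singleton hf).1 (hX hz)
  exact (hfm ((sInf_le hx').trans hx'x) (hyy'.trans (le_sSup hy'))).trans hz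

include hgm in
lemma sSup_le_apply_sInf_sSup_of_subset_stateU (hg : ∀ x y, Ou x y = {g x y}) {X Y : Set L}
    (hY : Y ⊆ stateU Ou X Y) : sSup Y ≤ g (sInf X) (sSup Y) := by
  refine sSup_le fun z hz => ?_
  obtain ⟨x, ⟨x', hx', hx'x⟩, y, ⟨y', hy', hyy'⟩, hz⟩ := (mem_stateU_of_eq_singleton hg).1 (hY hz)
  exact hz.trans (hgm ((sInf_le hx').trans hx'x) (hyy'.trans (le_sSup hy')))

/-- `≤ᵢ` on `L²` is the product order on `L × Lᵒᵈ`. -/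
def detApprox : L × Lᵒᵈ →o L × Lᵒᵈ where
  toFun p := (f p.1 (OrderDual.ofDual p.2), OrderDual.toDual (g p.1 (OrderDual.ofDual p.2)))
  monotone' _ _ hpq := ⟨hfm hpq.1 hpq.2, hgm hpq.1 hpq.2⟩

include hfm hgm in
/-- Knaster–Tarski: the least fixpoint is the least prefixpoint. -/
lemma least_fixpoint_le_of_prefixpoint {xkk ykk : L}
    (hleast : ∀ x y : L, f x y = x → g x y = y → xkk ≤ x ∧ y ≤ ykk) {a b : L}
    (ha : f a b ≤ a) (hb : b ≤ g a b) : xkk ≤ a ∧ b ≤ ykk := by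
  set F := detApprox hfm hgm
  have hfix : F (OrderHom.lfp F) = OrderHom.lfp F := OrderHom.map_lfp F
  obtain ⟨hxkk, hykk⟩ := hleast _ _ (congrArg Prod.fst hfix)
    (congrArg (OrderDual.ofDual ∘ Prod.snd) hfix)
  have hle : OrderHom.lfp F ≤ (a, OrderDual.toDual b) := OrderHom.lfp_le F ⟨ha, hb⟩
  exact ⟨hxkk.trans hle.1, OrderDual.toDual_le.mp hle.2 |>.trans hykk⟩

end CompleteLattice

/-- For a singleton-valued (i.e. deterministic) ndao whose deterministic
approximation operator has `≤ᵢ`-least fixpoint `(xkk, ykk)`, the `⪯ᴬᵢ`-least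
fixpoint of the derived state operator is `(↑{xkk}, ↓{ykk})`. -/
theorem kripke_kleene_state_of_deterministic {L : Type*} [CompleteLattice L]
    (O : NDAO L) (f g : L → L → L)
    (hf : ∀ x y, O.l x y = {f x y}) (hg : ∀ x y, O.u x y = {g x y})
    (xkk ykk : L)
    (hfix : f xkk ykk = xkk ∧ g xkk ykk = ykk)
    (hleast : ∀ x y : L, f x y = x → g x y = y → xkk ≤ x ∧ y ≤ ykk) :
    stateL O.l (upClos {xkk}) (downClos {ykk}) = upClos {xkk} ∧
    stateU O.u (upClos {xkk}) (downClos {ykk}) = downClos {ykk} ∧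
    (∀ X Y : Set L, IsUpperSet X → IsLowerSet Y →
       stateL O.l X Y = X → stateU O.u X Y = Y →
       AiLE (upClos {xkk}) (downClos {ykk}) X Y) := by
  have hfm := O.mono_of_l_eq_singleton hf
  have hgm := O.anti_of_u_eq_singleton hg
  refine ⟨by rw [stateL_upClos_downClos_singleton hf hfm, hfix.1],
    by rw [stateU_upClos_downClos_singleton hg hgm, hfix.2], ?_⟩
  intro X Y _ _ hX hY
  obtain ⟨hxkk, hykk⟩ := least_fixpoint_le_of_prefixpoint hfm hgm hleast
    (apply_sInf_sSup_le_sInf_of_subset_stateL hfm hf hX.ge)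
    (sSup_le_apply_sInf_sSup_of_subset_stateU hgm hg hY.ge)
  exact ⟨smythLE_upClos_singleton.2 fun x hx => hxkk.trans (sInf_le hx),
    hoareLE_downClos_singleton.2 fun y hy => (le_sSup hy).trans hykk⟩
end

section
/- Let L be a lattice and O : L → ℘(L) a ⪯ˢ-monotonic non-deterministic operator (O(x) ≠ ∅ for all x, and x ≤ y implies O(x) ⪯ˢ O(y)). If w is a ≤-minimal pre-fixpoint of O (O(w) ⪯ˢ {w}, and there is no w' < w with O(w') ⪯ˢ {w'}), then w ∈ O(w) and w is a ≤-minimal fixpoint of O (there is no w' < w with w' ∈ O(w')). -/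
section SmythLE

variable {L : Type*} [Preorder L]

theorem smythLE_singleton_iff {X : Set L} {y : L} : SmythLE X {y} ↔ ∃ x ∈ X, x ≤ y := by
  simp only [SmythLE, Set.mem_singleton_iff, forall_eq]

theorem smythLE_singleton_of_mem {X : Set L} {y : L} (hy : y ∈ X) : SmythLE X {y} :=
  smythLE_singleton_iff.2 ⟨y, hy, le_rfl⟩

theorem smythLE_singleton_of_mem_of_le {O : L → Set L}
    (hmono : ∀ x y : L, x ≤ y → SmythLE (O x) (O y)) {x w : L} (hx : x ∈ O w) (hxw : x ≤ w) :
    SmythLE (O x) {x} :=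
  smythLE_singleton_iff.2 (hmono x w hxw x hx)

end SmythLE

theorem minimal_prefixpoint_is_minimal_fixpoint_general {L : Type*} [Lattice L]
    (O : L → Set L)
    (hmono : ∀ x y : L, x ≤ y → SmythLE (O x) (O y))
    (w : L)
    (hpre : SmythLE (O w) {w})
    (hminpre : ¬ ∃ w' : L, w' < w ∧ SmythLE (O w') {w'}) :
    w ∈ O w ∧ ¬ ∃ w' : L, w' < w ∧ w' ∈ O w' := by
  obtain ⟨x, hxO, hxw⟩ := smythLE_singleton_iff.1 hpre
  have hxeq : x = w := hxw.eq_of_not_lt fun hlt =>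
    hminpre ⟨x, hlt, smythLE_singleton_of_mem_of_le hmono hxO hxw⟩
  refine ⟨hxeq ▸ hxO, ?_⟩
  rintro ⟨w', hlt, hfix⟩
  exact hminpre ⟨w', hlt, smythLE_singleton_of_mem hfix⟩

/-- A `≤`-minimal pre-fixpoint of a `⪯ˢ`-monotonic non-deterministic operator
is a `≤`-minimal fixpoint. -/
theorem minimal_prefixpoint_is_minimal_fixpoint {L : Type*} [Lattice L]
    (O : L → Set L)
    (hne : ∀ x : L, (O x).Nonempty)
    (hmono : ∀ x y : L, x ≤ y → SmythLE (O x) (O y))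
    (w : L)
    (hpre : SmythLE (O w) {w})
    (hminpre : ¬ ∃ w' : L, w' < w ∧ SmythLE (O w') {w'}) :
    w ∈ O w ∧ ¬ ∃ w' : L, w' < w ∧ w' ∈ O w' :=
  minimal_prefixpoint_is_minimal_fixpoint_general O hmono w hpre hminpre
end

section
/- Let L be a finite complete lattice and 𝒪 an ndao on L such that 𝒪ₗ(x,y) = {f(x,y)} and 𝒪ᵤ(x,y) = {g(x,y)} are singletons for all x, y ∈ L. Then for all x, y ∈ L: C(𝒪ₗ)(y) = {lfp(x' ↦ f(x', y))} and C(𝒪ᵤ)(x) = {lfp(y' ↦ g(x, y'))}, where lfp denotes the least fixpoint of the respective ≤-monotone map on L. -/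
/-- The complete lower stable operator. -/
def Cl {L : Type*} [Lattice L] (O : NDAO L) (y : L) : Set L :=
  {x | x ∈ O.l x y ∧ ¬ ∃ x' : L, x' < x ∧ x' ∈ O.l x' y}

/-- The complete upper stable operator. -/
def Cu {L : Type*} [Lattice L] (O : NDAO L) (x : L) : Set L :=
  {y | y ∈ O.u x y ∧ ¬ ∃ y' : L, y' < y ∧ y' ∈ O.u x y'}

/-! Monotonicity of the ndao makes the components of a singleton-valued ndao monotone maps, whose
fixpoints are exactly the points `x ∈ 𝒪ₗ(x, y)` (resp. `y ∈ 𝒪ᵤ(x, y)`). The complete stable operators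
collect the minimal such fixpoints, and the Knaster–Tarski least fixpoint is the only minimal one. -/

namespace NDAO

variable {L : Type*}

section Lattice

variable [Lattice L] (O : NDAO L)

theorem Cl_eq_setOf_minimal (y : L) : Cl O y = {x | Minimal (fun x' => x' ∈ O.l x' y) x} := by
  ext x
  simp only [Cl, Set.mem_ofPred_eq, minimal_iff_forall_lt, not_exists, not_and]

theorem Cu_eq_setOf_minimal (x : L) : Cu O x = {y | Minimal (fun y' => y' ∈ O.u x y') y} := by
  ext y
  simp only [Cu, Set.mem_ofPred_eq, minimal_iff_forall_lt, not_exists, not_and]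

variable {f g : L → L → L}

theorem monotone_left_of_l_eq_singleton (hf : ∀ x y, O.l x y = {f x y}) (y : L) :
    Monotone fun x' => f x' y := by
  intro a b hab
  simpa only [hf, SmythLE, Set.mem_singleton_iff, forall_eq, exists_eq_left]
    using (O.mono hab (le_refl y)).1

theorem monotone_right_of_u_eq_singleton (hg : ∀ x y, O.u x y = {g x y}) (x : L) :
    Monotone fun y' => g x y' := by
  intro a b hab
  simpa only [hg, HoareLE, Set.mem_singleton_iff, forall_eq, exists_eq_left]
    using (O.mono (le_refl x) hab).2

def lowerComponent (hf : ∀ x y, O.l x y = {f x y}) (y : L) : L →o L :=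
  ⟨fun x' => f x' y, O.monotone_left_of_l_eq_singleton hf y⟩

def upperComponent (hg : ∀ x y, O.u x y = {g x y}) (x : L) : L →o L :=
  ⟨fun y' => g x y', O.monotone_right_of_u_eq_singleton hg x⟩

end Lattice

variable [CompleteLattice L] (O : NDAO L) {f g : L → L → L}

theorem Cl_eq_singleton_lfp (hf : ∀ x y, O.l x y = {f x y}) (y : L) :
    Cl O y = {(O.lowerComponent hf y).lfp} := by
  rw [Cl_eq_setOf_minimal]
  ext x
  rw [Set.mem_singleton_iff, ← (O.lowerComponent hf y).isLeast_lfp.minimal_iff]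
  simp only [Set.mem_ofPred_eq, hf, Set.mem_singleton_iff, Function.mem_fixedPoints,
    Function.IsFixedPt, lowerComponent, OrderHom.coe_mk, eq_comm]

theorem Cu_eq_singleton_lfp (hg : ∀ x y, O.u x y = {g x y}) (x : L) :
    Cu O x = {(O.upperComponent hg x).lfp} := by
  rw [Cu_eq_setOf_minimal]
  ext y
  rw [Set.mem_singleton_iff, ← (O.upperComponent hg x).isLeast_lfp.minimal_iff]
  simp only [Set.mem_ofPred_eq, hg, Set.mem_singleton_iff, Function.mem_fixedPoints,
    Function.IsFixedPt, upperComponent, OrderHom.coe_mk, eq_comm]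

end NDAO

theorem complete_stable_operator_deterministic_general {L : Type*}
    [CompleteLattice L] (O : NDAO L) (f g : L → L → L)
    (hf : ∀ x y, O.l x y = {f x y}) (hg : ∀ x y, O.u x y = {g x y}) :
    ∀ x y : L,
      (∃ a : L, IsLeast {x' : L | f x' y = x'} a ∧ Cl O y = {a}) ∧
      (∃ b : L, IsLeast {y' : L | g x y' = y'} b ∧ Cu O x = {b}) :=
  fun x y =>
    ⟨⟨_, (O.lowerComponent hf y).isLeast_lfp, O.Cl_eq_singleton_lfp hf y⟩,
      ⟨_, (O.upperComponent hg x).isLeast_lfp, O.Cu_eq_singleton_lfp hg x⟩⟩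

/-- For a singleton-valued ndao on a finite complete lattice, the complete
stable operators return the singleton consisting of the least fixpoint of the
corresponding component map. -/
theorem complete_stable_operator_deterministic {L : Type*}
    [CompleteLattice L] [Finite L] (O : NDAO L) (f g : L → L → L)
    (hf : ∀ x y, O.l x y = {f x y}) (hg : ∀ x y, O.u x y = {g x y}) :
    ∀ x y : L,
      (∃ a : L, IsLeast {x' : L | f x' y = x'} a ∧ Cl O y = {a}) ∧
      (∃ b : L, IsLeast {y' : L | g x y' = y'} b ∧ Cu O x = {b}) :=
  complete_stable_operator_deterministic_general O f g hf hg
end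

section
/- Let P be a disjunctive logic program over a finite set of atoms A, and let (x, y) be a consistent four-valued interpretation (x ⊆ y ⊆ A). Then (x, y) is a weakly supported model of P if and only if x ∈ ICˡ_P(x,y) and y ∈ ICᵘ_P(x,y). -/
/-- Propositional formulas over atoms of type `A`, built from `⊤`, `⊥`, atoms,
negation, conjunction and disjunction. -/
inductive Fmla (A : Type*) where
  | top : Fmla A
  | bot : Fmla A
  | atom : A → Fmla A
  | neg : Fmla A → Fmla A
  | conj : Fmla A → Fmla A → Fmla A
  | disj : Fmla A → Fmla A → Fmla A

/-- Four-valued evaluation of a formula under the interpretation `(x, y)`.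
Belnap's four values are encoded as pairs of propositions:
`T = (True, True)`, `C = (True, False)`, `U = (False, True)`,
`F = (False, False)`; the truth order `≤ₜ` is the componentwise order on
`Prop × Prop`, so `∧` is `⊓` (the `≤ₜ`-glb), `∨` is `⊔` (the `≤ₜ`-lub), and
negation swaps the two components negated (swapping `T` and `F` and fixing
`C` and `U`). -/
noncomputable def feval {A : Type*} (x y : Set A) : Fmla A → Prop × Prop
  | .top => (True, True)
  | .bot => (False, False)
  | .atom a => (a ∈ x, a ∈ y)
  | .neg φ => (¬ (feval x y φ).2, ¬ (feval x y φ).1)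
  | .conj φ ψ => feval x y φ ⊓ feval x y ψ
  | .disj φ ψ => feval x y φ ⊔ feval x y ψ

/-- A rule `⋁Δ ← φ` of a disjunctive logic program: a nonempty finite head of
atoms and a body formula. -/
structure Rule (A : Type*) where
  head : Finset A
  head_nonempty : head.Nonempty
  body : Fmla A

/-- The four-valued evaluation of the disjunction `⋁Δ` of a nonempty set of
atoms: the `≤ₜ`-least upper bound of the values of the atoms in `Δ`. -/
def headEval {A : Type*} (Δ : Finset A) (x y : Set A) : Prop × Prop :=
  (∃ a ∈ Δ, a ∈ x, ∃ a ∈ Δ, a ∈ y)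

/-- `(x, y)` is a (four-valued) model of the program `P`:
`(x,y)(⋁Δ) ≥ₜ (x,y)(φ)` for every rule `⋁Δ ← φ ∈ P`. -/
def IsModel {A : Type*} (P : Set (Rule A)) (x y : Set A) : Prop :=
  ∀ r ∈ P, feval x y r.body ≤ headEval r.head x y

/-- `(x, y)` is a weakly supported model of `P`: it is a model, and for every
`p ∈ y` there is a rule `⋁Δ ← φ ∈ P` with `p ∈ Δ` and `(x,y)(φ) ≥ₜ (x,y)(p)`. -/
def WeaklySupported {A : Type*} (P : Set (Rule A)) (x y : Set A) : Prop :=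
  IsModel P x y ∧
  ∀ p ∈ y, ∃ r ∈ P, p ∈ r.head ∧ feval x y (.atom p) ≤ feval x y r.body

/-- `HDˡ_P(x,y)`: heads of rules whose body evaluates to `T` or `C`. -/
def HDl {A : Type*} (P : Set (Rule A)) (x y : Set A) : Set (Finset A) :=
  {Δ | ∃ r ∈ P, r.head = Δ ∧ (feval x y r.body).1}

/-- `HDᵘ_P(x,y)`: heads of rules whose body evaluates to `T` or `U`. -/
def HDu {A : Type*} (P : Set (Rule A)) (x y : Set A) : Set (Finset A) :=
  {Δ | ∃ r ∈ P, r.head = Δ ∧ (feval x y r.body).2}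

/-- `ICˡ_P(x,y)`: sets of atoms contained in `⋃HDˡ_P(x,y)` that intersect
every head in `HDˡ_P(x,y)`. -/
def ICl {A : Type*} (P : Set (Rule A)) (x y : Set A) : Set (Set A) :=
  {x₁ | x₁ ⊆ {a | ∃ Δ ∈ HDl P x y, a ∈ Δ} ∧
        ∀ Δ ∈ HDl P x y, ∃ a ∈ Δ, a ∈ x₁}

/-- `ICᵘ_P(x,y)`: sets of atoms contained in `⋃HDᵘ_P(x,y)` that intersect
every head in `HDᵘ_P(x,y)`. -/
def ICu {A : Type*} (P : Set (Rule A)) (x y : Set A) : Set (Set A) :=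
  {y₁ | y₁ ⊆ {a | ∃ Δ ∈ HDu P x y, a ∈ Δ} ∧
        ∀ Δ ∈ HDu P x y, ∃ a ∈ Δ, a ∈ y₁}

/-! Being a model says that every head in `HDˡ` meets `x` and every head in `HDᵘ` meets `y`;
for a consistent interpretation, weak support says that `x ⊆ ⋃HDˡ` and `y ⊆ ⋃HDᵘ`.
The two halves of each `IC` condition are these two facts. -/

lemma feval_snd_of_fst {A : Type*} {x y : Set A} (hxy : x ⊆ y) :
    ∀ φ : Fmla A, (feval x y φ).1 → (feval x y φ).2
  | .top, h => h
  | .bot, h => h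
  | .atom _, h => hxy h
  | .neg φ, h => fun h₁ => h (feval_snd_of_fst hxy φ h₁)
  | .conj φ ψ, h => ⟨feval_snd_of_fst hxy φ h.1, feval_snd_of_fst hxy ψ h.2⟩
  | .disj φ ψ, h => h.imp (feval_snd_of_fst hxy φ) (feval_snd_of_fst hxy ψ)

section

variable {A : Type*} (P : Set (Rule A)) {x y : Set A}

lemma isModel_iff_meets_heads :
    IsModel P x y ↔
      (∀ Δ ∈ HDl P x y, ∃ a ∈ Δ, a ∈ x) ∧ (∀ Δ ∈ HDu P x y, ∃ a ∈ Δ, a ∈ y) := by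
  constructor
  · intro hmod
    exact ⟨fun _ ⟨r, hr, hΔ, hb⟩ => hΔ ▸ (hmod r hr).1 hb,
      fun _ ⟨r, hr, hΔ, hb⟩ => hΔ ▸ (hmod r hr).2 hb⟩
  · rintro ⟨hx, hy⟩ r hr
    exact ⟨fun hb => hx r.head ⟨r, hr, rfl, hb⟩, fun hb => hy r.head ⟨r, hr, rfl, hb⟩⟩

lemma supported_iff_subset_heads (hxy : x ⊆ y) :
    (∀ p ∈ y, ∃ r ∈ P, p ∈ r.head ∧ feval x y (.atom p) ≤ feval x y r.body) ↔
      x ⊆ {a | ∃ Δ ∈ HDl P x y, a ∈ Δ} ∧ y ⊆ {a | ∃ Δ ∈ HDu P x y, a ∈ Δ} := by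
  constructor
  · intro hsup
    refine ⟨fun p hp => ?_, fun p hp => ?_⟩
    · obtain ⟨r, hr, hpr, hle⟩ := hsup p (hxy hp)
      exact ⟨r.head, ⟨r, hr, rfl, hle.1 hp⟩, hpr⟩
    · obtain ⟨r, hr, hpr, hle⟩ := hsup p hp
      exact ⟨r.head, ⟨r, hr, rfl, hle.2 hp⟩, hpr⟩
  · rintro ⟨hx, hy⟩ p hp
    by_cases hpx : p ∈ x
    · -- `p` is `T`, so the body must be `T`; consistency rules out `C`
      obtain ⟨_, ⟨r, hr, rfl, hb⟩, hpr⟩ := hx hpx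
      exact ⟨r, hr, hpr, fun _ => hb, fun _ => feval_snd_of_fst hxy r.body hb⟩
    · obtain ⟨_, ⟨r, hr, rfl, hb⟩, hpr⟩ := hy hp
      exact ⟨r, hr, hpr, fun h => absurd h hpx, fun _ => hb⟩

end

theorem weakly_supported_iff_fixpoint_of_IC_general {A : Type*}
    (P : Set (Rule A))
    (x y : Set A) (hcons : x ⊆ y) :
    WeaklySupported P x y ↔ (x ∈ ICl P x y ∧ y ∈ ICu P x y) := by
  rw [WeaklySupported, isModel_iff_meets_heads, supported_iff_subset_heads P hcons]
  exact and_and_and_comm.trans (and_congr and_comm and_comm)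

/-- A consistent interpretation `(x, y)` is a weakly supported model of a
disjunctive logic program `P` over a finite set of atoms iff
`x ∈ ICˡ_P(x,y)` and `y ∈ ICᵘ_P(x,y)`. -/
theorem weakly_supported_iff_fixpoint_of_IC {A : Type*} [Fintype A]
    (P : Set (Rule A)) (hP : P.Finite)
    (x y : Set A) (hcons : x ⊆ y) :
    WeaklySupported P x y ↔ (x ∈ ICl P x y ∧ y ∈ ICu P x y) :=
  weakly_supported_iff_fixpoint_of_IC_general P x y hcons
end
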